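/- Let G=(V,E) be a connected simple graph not isomorphic to a star, let k be an integer with 1 ≤ k < |V|−1, and let G'=(V',E') = β(G,k). Let S ⊊ V' be such that |S| ≥ |L| + |M| + k. Then a vertex f ∈ M ∩ S is satisfied in G'[S] (i.e., d_S(f)·|V'∖S| ≥ d_{V'∖S}(f)·(|S|−1)) if and only if d_{V'∖S}(f) < |V'∖S|. -/

import Mathlib

open SimpleGraph

/-- Number of neighbors of `v` inside `T`. -/
noncomputable def degIn {W : Type*} (G : SimpleGraph W) (T : Set W) (v : W) : ℕ :=
  (T ∩ G.neighborSet v).ncard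

/-- `G[S]` is a proportionally dense subgraph. -/
def IsPDS {W : Type*} (G : SimpleGraph W) (S : Set W) : Prop :=
  S ⊂ Set.univ ∧ 2 ≤ S.ncard ∧
    ∀ u ∈ S, degIn G Sᶜ u * (S.ncard - 1) ≤ degIn G S u * Sᶜ.ncard

/-- A star is a complete bipartite graph `K_{1,ℓ}`, `ℓ ≥ 1`. -/
def IsStar {V : Type*} (G : SimpleGraph V) : Prop :=
  ∃ ℓ : ℕ, 1 ≤ ℓ ∧ Nonempty (G ≃g completeBipartiteGraph Unit (Fin ℓ))

/-- The number `|L| = |M| ⬝ (|V| - k - 1) - k + 1` of extra vertices in `β(G,k)`. -/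
noncomputable def lsize {V : Type*} [Fintype V] (G : SimpleGraph V) (k : ℕ) : ℕ :=
  G.edgeSet.ncard * (Fintype.card V - k - 1) - k + 1

/-- Vertex type of the bipartite graph `β(G,k)`: `L` (the `Fin` part), `M` (edge
vertices), and `N = V`. -/
abbrev BetaVert (V : Type*) [Fintype V] (G : SimpleGraph V) (k : ℕ) : Type _ :=
  (Fin (lsize G k) ⊕ ↥G.edgeSet) ⊕ V

/-- The bipartite graph `β(G,k)`: every vertex of `M` is adjacent to every vertex
of `L`, and a vertex `e ∈ M` is adjacent to `u ∈ N` iff `u` is not an endpoint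
of the edge `e` of `G`; there are no other edges. -/
def betaGraph {V : Type*} [Fintype V] (G : SimpleGraph V) (k : ℕ) :
    SimpleGraph (BetaVert V G k) where
  Adj x y :=
    match x, y with
    | Sum.inl (Sum.inl _), Sum.inl (Sum.inr _) => True
    | Sum.inl (Sum.inr _), Sum.inl (Sum.inl _) => True
    | Sum.inl (Sum.inr e), Sum.inr u => u ∉ (e : Sym2 V)
    | Sum.inr u, Sum.inl (Sum.inr e) => u ∉ (e : Sym2 V)
    | _, _ => False
  symm := by
    constructor
    rintro ((a | e) | u) ((b | f) | v) h <;> simp_all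
  loopless := by
    constructor
    rintro ((a | e) | u) h <;> simp_all

/-- The set `L ∪ M` in `β(G,k)`. -/
def betaLM {V : Type*} [Fintype V] (G : SimpleGraph V) (k : ℕ) : Set (BetaVert V G k) :=
  Set.range Sum.inl

/-- The set `M` of edge-vertices in `β(G,k)`. -/
def betaM {V : Type*} [Fintype V] (G : SimpleGraph V) (k : ℕ) : Set (BetaVert V G k) :=
  Set.range (fun e : ↥G.edgeSet => Sum.inl (Sum.inr e))

/-!
An edge vertex `f ∈ M` of `β(G,k)` is adjacent to all of `L` and to all of `N` but the two
endpoints of its edge, so its degree is `δ = |V'| - |M| - 2`. With `d = d_{V'∖S}(f)` and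
`c = |V'∖S|`, satisfaction `d (|S| - 1) ≤ (δ - d) c` reads `d (|V'| - 1) ≤ δ c`. For `d = c` this
would force `|V'| ≤ δ + 1`, which is false. For `d ≤ c - 1` it suffices that
`c (|V'| - 1 - δ) = c (|M| + 1) < |V'|`, and this follows from `c ≤ |V| - k` (the size bound on `S`)
together with the choice `|L| = |M| (|V| - k - 1) - k + 1`.
-/

theorem degIn_add_degIn_compl {W : Type*} [Finite W] (G : SimpleGraph W) (S : Set W) (v : W) :
    degIn G S v + degIn G Sᶜ v = (G.neighborSet v).ncard := by
  rw [degIn, degIn, Set.inter_comm, Set.inter_comm Sᶜ, ← Set.sdiff_eq,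
    Set.ncard_inter_add_ncard_sdiff_eq_ncard]

theorem degIn_le_ncard {W : Type*} [Finite W] (G : SimpleGraph W) (T : Set W) (v : W) :
    degIn G T v ≤ T.ncard :=
  Set.ncard_le_ncard Set.inter_subset_left

theorem mul_sub_one_le_mul_iff_lt {s c d dS r : ℕ} (hc : 0 < c) (hdc : d ≤ c) (hr : 0 < r)
    (hN : d + dS + r + 1 = s + c) (hcr : c * r < s + c) :
    d * (s - 1) ≤ dS * c ↔ d < c := by
  have hs : 0 < s := by
    have := Nat.le_mul_of_pos_right c hr
    omega
  obtain ⟨s, rfl⟩ : ∃ s', s = s' + 1 := ⟨s - 1, by omega⟩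
  obtain ⟨c, rfl⟩ : ∃ c', c = c' + 1 := ⟨c - 1, by omega⟩
  rw [Nat.add_sub_cancel]
  constructor
  · intro h
    by_contra! hcd
    obtain rfl : d = c + 1 := by omega
    have : s ≤ dS := Nat.le_of_mul_le_mul_left (by linarith) hc
    omega
  · intro hlt
    nlinarith [Nat.mul_le_mul_right (s + c + 1) (Nat.le_of_lt_succ hlt)]

theorem Sym2.ncard_setOf_notMem_add_two {V : Type*} [Finite V] {z : Sym2 V} (hz : ¬ z.IsDiag) :
    {u | u ∉ z}.ncard + 2 = Nat.card V := by
  induction z using Sym2.ind with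
  | _ a b =>
    have hpair : {u | u ∉ s(a, b)} = {a, b}ᶜ := by ext; simp
    rw [hpair, ← Set.ncard_pair (Sym2.mk_isDiag_iff.not.mp hz), Set.ncard_compl_add_ncard]

theorem neighborSet_betaGraph_edge {V : Type*} [Fintype V] (G : SimpleGraph V) (k : ℕ)
    (e : ↥G.edgeSet) :
    (betaGraph G k).neighborSet (Sum.inl (Sum.inr e)) =
      Set.range (Sum.inl ∘ Sum.inl) ∪ Sum.inr '' {u | u ∉ (e : Sym2 V)} := by
  ext ((a | f) | u) <;> simp [betaGraph, SimpleGraph.neighborSet]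

theorem ncard_neighborSet_betaGraph_edge {V : Type*} [Fintype V] (G : SimpleGraph V) (k : ℕ)
    (e : ↥G.edgeSet) :
    ((betaGraph G k).neighborSet (Sum.inl (Sum.inr e))).ncard + 2
      = lsize G k + Fintype.card V := by
  have hdisj : Disjoint (Set.range (Sum.inl ∘ Sum.inl : Fin (lsize G k) → BetaVert V G k))
      (Sum.inr '' {u | u ∉ (e : Sym2 V)}) := by
    rw [Set.disjoint_left]
    rintro _ ⟨a, rfl⟩ ⟨u, -, hu⟩
    cases hu
  rw [neighborSet_betaGraph_edge, Set.ncard_union_eq hdisj,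
    Set.ncard_range_of_injective (Sum.inl_injective.comp Sum.inl_injective),
    Set.ncard_image_of_injective _ Sum.inr_injective, add_assoc,
    Sym2.ncard_setOf_notMem_add_two (G.not_isDiag_of_mem_edgeSet e.2)]
  simp

theorem natCard_betaVert {V : Type*} [Fintype V] (G : SimpleGraph V) (k : ℕ) :
    Nat.card (BetaVert V G k) = lsize G k + G.edgeSet.ncard + Fintype.card V := by
  simp [Nat.card_sum]

theorem mul_le_lsize_add {V : Type*} [Fintype V] (G : SimpleGraph V) (k : ℕ) :
    G.edgeSet.ncard * (Fintype.card V - k - 1) + 1 ≤ lsize G k + k := by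
  unfold lsize; omega

theorem ncard_compl_mul_lt_natCard_betaVert {V : Type*} [Fintype V] (G : SimpleGraph V) (k : ℕ)
    (S : Set (BetaVert V G k)) (hcard : lsize G k + G.edgeSet.ncard + k ≤ S.ncard) :
    Sᶜ.ncard * (G.edgeSet.ncard + 1) < Nat.card (BetaVert V G k) := by
  have htot := Set.ncard_add_ncard_compl S
  have hL := mul_le_lsize_add G k
  rw [natCard_betaVert] at htot ⊢
  generalize G.edgeSet.ncard = m at *
  generalize lsize G k = L at *
  obtain ⟨p, hp⟩ : ∃ p, Fintype.card V = k + p := ⟨Fintype.card V - k, by omega⟩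
  rw [hp] at htot hL ⊢
  have hcp : Sᶜ.ncard ≤ p := by omega
  rcases p with _ | p
  · rw [Nat.le_zero.mp hcp]
    omega
  · rw [show k + (p + 1) - k - 1 = p by omega] at hL
    nlinarith [Nat.mul_le_mul_right (m + 1) hcp]

theorem beta_M_satisfied_iff_general {V : Type*} [Fintype V] (G : SimpleGraph V)
    (k : ℕ)
    (S : Set (BetaVert V G k)) (hSne : S ⊂ Set.univ)
    (hcard : lsize G k + G.edgeSet.ncard + k ≤ S.ncard)
    (e : ↥G.edgeSet) :
    (degIn (betaGraph G k) Sᶜ (Sum.inl (Sum.inr e)) * (S.ncard - 1)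
        ≤ degIn (betaGraph G k) S (Sum.inl (Sum.inr e)) * Sᶜ.ncard)
      ↔ degIn (betaGraph G k) Sᶜ (Sum.inl (Sum.inr e)) < Sᶜ.ncard := by
  have hc : 0 < Sᶜ.ncard := (Set.ncard_pos).mpr (Set.nonempty_compl.mpr hSne.ne)
  have hdeg := ncard_neighborSet_betaGraph_edge G k e
  rw [← degIn_add_degIn_compl (betaGraph G k) S] at hdeg
  have htot := Set.ncard_add_ncard_compl S
  have hcr := ncard_compl_mul_lt_natCard_betaVert G k S hcard
  rw [natCard_betaVert] at htot hcr
  exact mul_sub_one_le_mul_iff_lt hc (degIn_le_ncard _ _ _) (Nat.add_one_pos G.edgeSet.ncard)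
    (by omega) (by omega)

/-- Lemma 5 of the paper: if `|S| ≥ |L| + |M| + k`, a vertex `f ∈ M ∩ S` is
satisfied in `β(G,k)[S]` iff `d_{V'∖S}(f) < |V'∖S|`. -/
theorem beta_M_satisfied_iff {V : Type*} [Fintype V] (G : SimpleGraph V)
    (hconn : G.Connected) (hstar : ¬ IsStar G)
    (k : ℕ) (hk1 : 1 ≤ k) (hk2 : k < Fintype.card V - 1)
    (S : Set (BetaVert V G k)) (hSne : S ⊂ Set.univ)
    (hcard : lsize G k + G.edgeSet.ncard + k ≤ S.ncard)
    (e : ↥G.edgeSet) (heS : (Sum.inl (Sum.inr e) : BetaVert V G k) ∈ S) :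
    (degIn (betaGraph G k) Sᶜ (Sum.inl (Sum.inr e)) * (S.ncard - 1)
        ≤ degIn (betaGraph G k) S (Sum.inl (Sum.inr e)) * Sᶜ.ncard)
      ↔ degIn (betaGraph G k) Sᶜ (Sum.inl (Sum.inr e)) < Sᶜ.ncard :=
  beta_M_satisfied_iff_general G k S hSne hcard e
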